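/- Let ε > 0 and define κ_ε : (0,∞) → ℝ by κ_ε(s) = Φ( s/2 − ε/s ) − e^ε Φ( −s/2 − ε/s ), where Φ is the standard normal cumulative distribution function. Then: (a) κ_ε is strictly increasing on (0,∞); (b) 0 < κ_ε(s) < 1 for every s > 0; (c) κ_ε(s) → 0 as s → 0⁺ and κ_ε(s) → 1 as s → ∞. Consequently κ_ε is a bijection from (0,∞) onto (0,1) and admits a (strictly increasing) inverse function κ̄_ε : (0,1) → (0,∞). -/

import Mathlib

/-!
Write `φ` for the standard normal density and `a = s/2 - ε/s`, `b = -s/2 - ε/s`. Since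
`b² = a² + 2ε`, we have `e^ε φ(b) = φ(a)`, so the derivative `φ(a) a' - e^ε φ(b) b'` of `κ_ε`
collapses to `φ(a) (a' - b') = φ(a) > 0`. As `s → 0⁺` both arguments tend to `-∞`, and as
`s → ∞` they tend to `+∞` and `-∞`, which gives the limits `0` and `1`. A continuous strictly
increasing function on `(0, ∞)` with these limits is a bijection onto `(0, 1)`, and its inverse
is again strictly increasing.
-/

open Real Filter Set

/-- The standard normal cumulative distribution function
`Φ(s) = (1/√(2π)) ∫_{-∞}^s e^{-τ²/2} dτ`. -/
noncomputable def stdNormalCDF (s : ℝ) : ℝ :=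
  (Real.sqrt (2 * Real.pi))⁻¹ * ∫ τ in Set.Iic s, Real.exp (-τ ^ 2 / 2)

/-- `κ_ε(s) = Φ(s/2 - ε/s) - e^ε Φ(-s/2 - ε/s)`. -/
noncomputable def kappa (ε s : ℝ) : ℝ :=
  stdNormalCDF (s / 2 - ε / s) - Real.exp ε * stdNormalCDF (-s / 2 - ε / s)

open MeasureTheory ProbabilityTheory Topology

theorem hasDerivAt_integral_Iic {E : Type*} [NormedAddCommGroup E] [NormedSpace ℝ E]
    [CompleteSpace E] {f : ℝ → E} (hfi : Integrable f) (hfc : Continuous f) (x : ℝ) :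
    HasDerivAt (fun y => ∫ t in Iic y, f t) (f x) x := by
  have hsplit :
      (fun y => ∫ t in Iic y, f t) = fun y => (∫ t in Iic x, f t) + ∫ t in x..y, f t := by
    funext y
    rw [← intervalIntegral.integral_Iic_sub_Iic hfi.integrableOn hfi.integrableOn,
      add_sub_cancel]
  rw [hsplit]
  exact (intervalIntegral.integral_hasDerivAt_right hfi.intervalIntegrable
    hfc.aestronglyMeasurable.stronglyMeasurableAtFilter hfc.continuousAt).const_add _

theorem StrictMonoOn.strictMonoOn_invFunOn {α β : Type*} [LinearOrder α] [Nonempty α] [Preorder β]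
    {f : α → β} {s : Set α} {t : Set β} (hf : StrictMonoOn f s) (hst : SurjOn f s t) :
    StrictMonoOn (Function.invFunOn f s) t := by
  intro y₁ hy₁ y₂ hy₂ hy
  rw [← hst.rightInvOn_invFunOn hy₁, ← hst.rightInvOn_invFunOn hy₂] at hy
  exact (hf.lt_iff_lt (hst.mapsTo_invFunOn hy₁) (hst.mapsTo_invFunOn hy₂)).1 hy

theorem StrictMonoOn.mapsTo_Ioo_of_tendsto {α β : Type*} [LinearOrder α] [DenselyOrdered α]
    [NoMaxOrder α] [TopologicalSpace α] [OrderTopology α] [LinearOrder β] [TopologicalSpace β]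
    [OrderClosedTopology β] {f : α → β} {a : α} {l u : β} (hf : StrictMonoOn f (Ioi a))
    (hl : Tendsto f (𝓝[>] a) (𝓝 l)) (hu : Tendsto f atTop (𝓝 u)) :
    MapsTo f (Ioi a) (Ioo l u) := by
  have : Nonempty α := ⟨a⟩
  intro x hx
  obtain ⟨x₁, hax₁, hx₁x⟩ := exists_between hx
  obtain ⟨x₂, hxx₂⟩ := exists_gt x
  have hx₁ : x₁ ∈ Ioi a := hax₁
  have hx₂ : x₂ ∈ Ioi a := hx.out.trans hxx₂
  have hlx₁ : l ≤ f x₁ := le_of_tendsto hl <| by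
    filter_upwards [Ioo_mem_nhdsGT hax₁] with t ht using (hf ht.1 hx₁ ht.2).le
  have hx₂u : f x₂ ≤ u := ge_of_tendsto hu <| by
    filter_upwards [eventually_ge_atTop x₂] with t ht using
      hf.monotoneOn hx₂ (hx₂.out.trans_le ht) ht
  exact ⟨hlx₁.trans_lt (hf hx₁ hx hx₁x), (hf hx hx₂ hxx₂).trans_le hx₂u⟩

theorem ContinuousOn.surjOn_Ioo_of_tendsto {α β : Type*} [ConditionallyCompleteLinearOrder α]
    [DenselyOrdered α] [NoMaxOrder α] [TopologicalSpace α] [OrderTopology α] [LinearOrder β]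
    [TopologicalSpace β] [OrderClosedTopology β] {f : α → β} {a : α} {l u : β}
    (hfc : ContinuousOn f (Ioi a)) (hl : Tendsto f (𝓝[>] a) (𝓝 l))
    (hu : Tendsto f atTop (𝓝 u)) : SurjOn f (Ioi a) (Ioo l u) := by
  intro y hy
  obtain ⟨x₁, hx₁y, hx₁⟩ :=
    ((hl.eventually (eventually_lt_nhds hy.1)).and self_mem_nhdsWithin).exists
  obtain ⟨x₂, hyx₂, hx₁x₂⟩ :=
    ((hu.eventually (eventually_gt_nhds hy.2)).and (eventually_gt_atTop x₁)).exists
  obtain ⟨x, hx, rfl⟩ := intermediate_value_Ioo hx₁x₂.le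
    (hfc.mono fun t ht => lt_of_lt_of_le hx₁ ht.1) ⟨hx₁y, hyx₂⟩
  exact ⟨x, lt_trans hx₁ hx.1, rfl⟩

theorem stdNormalCDF_eq_integral_gaussianPDFReal (s : ℝ) :
    stdNormalCDF s = ∫ τ in Iic s, gaussianPDFReal 0 1 τ := by
  simp [stdNormalCDF, gaussianPDFReal, integral_const_mul]

theorem hasDerivAt_stdNormalCDF (s : ℝ) :
    HasDerivAt stdNormalCDF (gaussianPDFReal 0 1 s) s := by
  simp only [funext stdNormalCDF_eq_integral_gaussianPDFReal]
  exact hasDerivAt_integral_Iic (integrable_gaussianPDFReal 0 1)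
    (by unfold gaussianPDFReal; fun_prop) s

theorem tendsto_stdNormalCDF_atBot : Tendsto stdNormalCDF atBot (𝓝 0) := by
  simp only [funext stdNormalCDF_eq_integral_gaussianPDFReal]
  exact tendsto_integral_Iic_zero tendsto_id

theorem tendsto_stdNormalCDF_atTop : Tendsto stdNormalCDF atTop (𝓝 1) := by
  simp only [funext stdNormalCDF_eq_integral_gaussianPDFReal]
  rw [← integral_gaussianPDFReal_eq_one 0 one_ne_zero]
  exact (aecover_Iic tendsto_id).integral_tendsto_of_countably_generated
    (integrable_gaussianPDFReal 0 1)

theorem exp_mul_gaussianPDFReal_of_sq_eq {ε a b : ℝ} (h : b ^ 2 = a ^ 2 + 2 * ε) :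
    exp ε * gaussianPDFReal 0 1 b = gaussianPDFReal 0 1 a := by
  simp only [gaussianPDFReal, NNReal.coe_one, mul_one, sub_zero, h]
  rw [mul_left_comm, ← exp_add]
  ring_nf

theorem hasDerivAt_kappa (ε : ℝ) {s : ℝ} (hs : s ≠ 0) :
    HasDerivAt (kappa ε) (gaussianPDFReal 0 1 (s / 2 - ε / s)) s := by
  have hdiv : HasDerivAt (fun x => ε / x) (-(ε / s ^ 2)) s :=
    ((hasDerivAt_const s ε).fun_div (hasDerivAt_id' s) hs).congr_deriv (by ring)
  have ha : HasDerivAt (fun x => x / 2 - ε / x) (1 / 2 + ε / s ^ 2) s :=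
    (((hasDerivAt_id' s).div_const 2).fun_sub hdiv).congr_deriv (by ring)
  have hb : HasDerivAt (fun x => -x / 2 - ε / x) (-1 / 2 + ε / s ^ 2) s :=
    (((hasDerivAt_neg s).div_const 2).fun_sub hdiv).congr_deriv (by ring)
  refine HasDerivAt.congr_deriv (f := kappa ε) (((hasDerivAt_stdNormalCDF _).comp s ha).fun_sub
    (((hasDerivAt_stdNormalCDF _).comp s hb).const_mul (exp ε))) ?_
  rw [← mul_assoc, exp_mul_gaussianPDFReal_of_sq_eq (a := s / 2 - ε / s) (by field_simp; ring)]
  ring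

theorem strictMonoOn_kappa (ε : ℝ) : StrictMonoOn (kappa ε) (Ioi 0) := by
  refine strictMonoOn_of_deriv_pos (convex_Ioi 0)
    (fun s hs => (hasDerivAt_kappa ε hs.ne').continuousAt.continuousWithinAt) fun s hs => ?_
  rw [interior_Ioi] at hs
  rw [(hasDerivAt_kappa ε hs.ne').deriv]
  exact gaussianPDFReal_pos 0 1 _ one_ne_zero

theorem tendsto_sub_div_nhdsGT_zero_atBot {g : ℝ → ℝ} {c ε : ℝ} (hg : Tendsto g (𝓝[>] 0) (𝓝 c))
    (hε : 0 < ε) : Tendsto (fun s => g s - ε / s) (𝓝[>] 0) atBot := by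
  simpa only [sub_eq_add_neg, div_eq_mul_inv, Function.comp_def] using
    hg.add_atBot (tendsto_neg_atTop_atBot.comp (tendsto_inv_nhdsGT_zero.const_mul_atTop hε))

theorem tendsto_kappa_nhdsGT_zero {ε : ℝ} (hε : 0 < ε) : Tendsto (kappa ε) (𝓝[>] 0) (𝓝 0) := by
  have ha := tendsto_sub_div_nhdsGT_zero_atBot
    (tendsto_nhdsWithin_of_tendsto_nhds ((continuous_id.div_const 2).tendsto 0)) hε
  have hb := tendsto_sub_div_nhdsGT_zero_atBot
    (tendsto_nhdsWithin_of_tendsto_nhds ((continuous_neg.div_const 2).tendsto 0)) hε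
  have h := (tendsto_stdNormalCDF_atBot.comp ha).sub
    ((tendsto_stdNormalCDF_atBot.comp hb).const_mul (exp ε))
  rwa [mul_zero, sub_zero] at h

theorem tendsto_kappa_atTop (ε : ℝ) : Tendsto (kappa ε) atTop (𝓝 1) := by
  have hdiv : Tendsto (fun s : ℝ => -(ε / s)) atTop (𝓝 (-0)) :=
    (tendsto_const_nhds.div_atTop tendsto_id).neg
  have ha : Tendsto (fun s : ℝ => s / 2 - ε / s) atTop atTop := by
    simpa only [sub_eq_add_neg, id] using (tendsto_id.atTop_div_const two_pos).atTop_add hdiv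
  have hb : Tendsto (fun s : ℝ => -s / 2 - ε / s) atTop atBot := by
    simpa only [sub_eq_add_neg, neg_div, id, Function.comp_def] using
      (tendsto_neg_atTop_atBot.comp (tendsto_id.atTop_div_const two_pos)).atBot_add hdiv
  have h := (tendsto_stdNormalCDF_atTop.comp ha).sub
    ((tendsto_stdNormalCDF_atBot.comp hb).const_mul (exp ε))
  rwa [mul_zero, sub_zero] at h

theorem stmt12 (ε : ℝ) (hε : 0 < ε) :
    StrictMonoOn (kappa ε) (Set.Ioi 0) ∧
    (∀ s : ℝ, 0 < s → kappa ε s ∈ Set.Ioo (0 : ℝ) 1) ∧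
    Filter.Tendsto (kappa ε) (nhdsWithin 0 (Set.Ioi 0)) (nhds 0) ∧
    Filter.Tendsto (kappa ε) Filter.atTop (nhds 1) ∧
    Set.BijOn (kappa ε) (Set.Ioi 0) (Set.Ioo 0 1) ∧
    ∃ kappaBar : ℝ → ℝ,
      Set.InvOn kappaBar (kappa ε) (Set.Ioi 0) (Set.Ioo 0 1) ∧
      StrictMonoOn kappaBar (Set.Ioo 0 1) := by
  have hmono := strictMonoOn_kappa ε
  have hcont : ContinuousOn (kappa ε) (Ioi 0) := fun s hs =>
    (hasDerivAt_kappa ε hs.ne').continuousAt.continuousWithinAt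
  have h0 := tendsto_kappa_nhdsGT_zero hε
  have h1 := tendsto_kappa_atTop ε
  have hbij : BijOn (kappa ε) (Ioi 0) (Ioo 0 1) :=
    ⟨hmono.mapsTo_Ioo_of_tendsto h0 h1, hmono.injOn, hcont.surjOn_Ioo_of_tendsto h0 h1⟩
  exact ⟨hmono, fun s hs => hbij.mapsTo hs, h0, h1, hbij, Function.invFunOn (kappa ε) (Ioi 0),
    hbij.invOn_invFunOn, hmono.strictMonoOn_invFunOn hbij.surjOn⟩
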